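/- For i.i.d. continuous observations and integers 1 ≤ r ≤ t ≤ n and k ≥ 1, the conditional factorial moment of the absolute rank satisfies E[A_{t,n}(A_{t,n}+1)⋯(A_{t,n}+k−1) | R_t = r] = [(n+1)(n+2)⋯(n+k) / ((t+1)(t+2)⋯(t+k))] · r(r+1)⋯(r+k−1). -/

import Mathlib

open MeasureTheory ProbabilityTheory Finset
open scoped ENNReal Classical

noncomputable section

/-- The σ-algebra on `Ω` generated by the functions `f 1, …, f t`. -/
def genFilt {Ω β : Type*} [MeasurableSpace β] (f : ℕ → Ω → β) (t : ℕ) :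
    MeasurableSpace Ω :=
  ⨆ i ∈ Set.Icc 1 t, MeasurableSpace.comap (f i) inferInstance

/-- `τ` is a stopping time with values in `{1,…,n}` of the filtration generated by `f`. -/
def IsStopTime {Ω β : Type*} [MeasurableSpace β] (f : ℕ → Ω → β) (n : ℕ) (τ : Ω → ℕ) : Prop :=
  (∀ ω, τ ω ∈ Set.Icc 1 n) ∧ ∀ t, MeasurableSet[genFilt f t] {ω | τ ω = t}

/-- The family `(f i)_{i ∈ s}` is independent under `μ`. -/
def IndepSeq {Ω β : Type*} [MeasurableSpace Ω] [MeasurableSpace β]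
    (f : ℕ → Ω → β) (s : Set ℕ) (μ : Measure Ω) : Prop :=
  iIndepFun (β := fun _ : s => β) (fun i : s => f i.1) μ

/-- `N` is independent of the family `(f i)_{i ∈ s}`. -/
def IndepOfSeq {Ω β : Type*} [MeasurableSpace Ω] [MeasurableSpace β]
    (N : Ω → ℕ) (f : ℕ → Ω → β) (s : Set ℕ) (μ : Measure Ω) : Prop :=
  IndepFun N (fun ω (i : s) => f i.1 ω) μ

/-- The absolute rank `A_{t,k}` of `X t` among `X 1, …, X k`
(the largest observation has rank 1). -/
def absRank {Ω : Type*} (X : ℕ → Ω → ℝ) (t k : ℕ) (ω : Ω) : ℕ :=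
  ((Finset.Icc 1 k).filter fun j => X t ω ≤ X j ω).card

/-- The relative rank `R_t = A_{t,t}`. -/
def relRank {Ω : Type*} (X : ℕ → Ω → ℝ) (t : ℕ) (ω : Ω) : ℕ := absRank X t t ω

/-- `(X i)_{i ∈ s}` are i.i.d. with an atomless (continuous) common distribution. -/
def IIDContinuousOn {Ω : Type*} [MeasurableSpace Ω] (X : ℕ → Ω → ℝ) (s : Set ℕ)
    (μ : Measure Ω) : Prop :=
  (∀ i ∈ s, Measurable (X i)) ∧ IndepSeq X s μ ∧
  (∀ i ∈ s, ∀ j ∈ s, IdentDistrib (X i) (X j) μ μ) ∧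
  (∀ i ∈ s, ∀ x : ℝ, μ {ω | X i ω = x} = 0)

/-!
Continuity and exchangeability make the order pattern of `(X_1, …, X_N)` a uniform random
permutation, so any expectation of a function of ranks is an average over `Perm (Fin N)`.
A permutation of `m + 1` points amounts to a permutation of the first `m` together with an
independent uniform position `c` of the last value. Adding `X_{m+1}` keeps `R_t` and raises
`A_{t,m}` by one exactly when `c` lies above `X_t`, which happens for `A_{t,m}` of the `m + 1`
positions. As `a · (a+1)^(k) = (a+k) · a^(k)` for rising factorials, this gives
`(m+1) · E[A_{t,m+1}^(k); R_t = r] = (m+1+k) · E[A_{t,m}^(k); R_t = r]`, and iterating from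
`A_{t,t} = R_t = r` gives the formula.
-/

open Equiv

theorem ascPochhammer_eval_eq_prod_range {R : Type*} [CommSemiring R] (k : ℕ) (x : R) :
    (ascPochhammer R k).eval x = ∏ j ∈ range k, (x + j) := by
  induction k with
  | zero => simp
  | succ k ih => simp [ascPochhammer_succ_right, ih, prod_range_succ]

theorem sum_ascPochhammer_eval_add_ite {m : ℕ} (p : Fin m) (k : ℕ) :
    ∑ c : Fin (m + 1),
        (ascPochhammer ℝ k).eval ((m - p + if p.castSucc < c then 1 else 0 : ℕ) : ℝ)
      = (m + 1 + k) * (ascPochhammer ℝ k).eval ((m - p : ℕ) : ℝ) := by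
  have hcard : #{c : Fin (m + 1) | p.castSucc < c} = m - p := by
    rw [filter_lt_eq_Ioi, Fin.card_Ioi, Fin.val_castSucc, Nat.add_sub_cancel]
  have hcard' : #{c : Fin (m + 1) | ¬ p.castSucc < c} = p + 1 := by
    rw [filter_not, card_sdiff_of_subset (filter_subset _ _), hcard, card_univ, Fintype.card_fin]
    omega
  have hsplit : ∀ c : Fin (m + 1),
      (ascPochhammer ℝ k).eval ((m - p + if p.castSucc < c then 1 else 0 : ℕ) : ℝ)
        = if p.castSucc < c then (ascPochhammer ℝ k).eval (((m - p : ℕ) : ℝ) + 1)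
          else (ascPochhammer ℝ k).eval ((m - p : ℕ) : ℝ) := by
    intro c; split_ifs <;> simp
  rw [sum_congr rfl fun c _ => hsplit c, sum_ite, sum_const, sum_const, hcard, hcard',
    nsmul_eq_mul, nsmul_eq_mul, ascPochhammer_eval_succ, Nat.cast_sub p.2.le]
  push_cast
  ring

/-- The rank of `x q` among the first `m` coordinates of `x`, the largest having rank `1`. -/
def prefixRank {α : Type*} [Preorder α] {N : ℕ} (x : Fin N → α) (q : Fin N) (m : ℕ) : ℕ :=
  #{j : Fin N | (j : ℕ) < m ∧ x q ≤ x j}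

section prefixRank

variable {α β : Type*} [Preorder α] [Preorder β] {N : ℕ}

theorem prefixRank_congr {x : Fin N → α} {y : Fin N → β} (h : ∀ i j, x i ≤ x j ↔ y i ≤ y j)
    (q : Fin N) (m : ℕ) : prefixRank x q m = prefixRank y q m := by
  simp only [prefixRank, h]

theorem prefixRank_comp_strictMono {α : Type*} [LinearOrder α] {f : α → β}
    (hf : StrictMono f) (x : Fin N → α) (q : Fin N) (m : ℕ) :
    prefixRank (f ∘ x) q m = prefixRank x q m :=
  prefixRank_congr (fun _ _ => hf.le_iff_le) q m

theorem measurable_prefixRank (q : Fin N) (m : ℕ) :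
    Measurable fun x : Fin N → ℝ => prefixRank x q m := by
  simp only [prefixRank, card_filter]
  refine Finset.measurable_sum _ fun j _ => Measurable.ite ?_ measurable_const measurable_const
  exact (MeasurableSet.const _).inter
    (measurableSet_le (measurable_pi_apply q) (measurable_pi_apply j))

theorem prefixRank_perm (σ : Perm (Fin N)) (q : Fin N) {m : ℕ} (hm : N ≤ m) :
    prefixRank σ q m = N - σ q :=
  calc prefixRank σ q m = #((Ici (σ q)).map σ.symm.toEmbedding) := by
        unfold prefixRank; congr 1; ext j; simp [mem_map_equiv, j.2.trans_le hm]
    _ = N - σ q := by rw [card_map, Fin.card_Ici]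

theorem prefixRank_castSucc (x : Fin (N + 1) → α) (q : Fin N) (m : ℕ) :
    prefixRank x q.castSucc m
      = prefixRank (x ∘ Fin.castSucc) q m
        + if N < m ∧ x q.castSucc ≤ x (Fin.last N) then 1 else 0 := by
  simp only [prefixRank, card_filter, Fin.sum_univ_castSucc, Fin.val_castSucc, Fin.val_last,
    Function.comp_apply]

end prefixRank

namespace Equiv.Perm

variable {m : ℕ}

def insertLast (τ : Perm (Fin m)) (c : Fin (m + 1)) : Perm (Fin (m + 1)) :=
  Equiv.ofBijective (Fin.snoc (α := fun _ => Fin (m + 1)) (c.succAbove ∘ τ) c) <|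
    Finite.injective_iff_bijective.mp <| Fin.snoc_injective_iff.mpr
      ⟨(Fin.succAbove_right_injective).comp τ.injective, fun ⟨_, hi⟩ => Fin.succAbove_ne c _ hi⟩

@[simp]
theorem insertLast_castSucc (τ : Perm (Fin m)) (c : Fin (m + 1)) (i : Fin m) :
    insertLast τ c i.castSucc = c.succAbove (τ i) := by
  simp [insertLast]

@[simp]
theorem insertLast_last (τ : Perm (Fin m)) (c : Fin (m + 1)) : insertLast τ c (Fin.last m) = c := by
  simp [insertLast]

theorem bijective_insertLast : Function.Bijective fun p : Perm (Fin m) × Fin (m + 1) =>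
    insertLast p.1 p.2 := by
  rw [Fintype.bijective_iff_injective_and_card]
  refine ⟨fun ⟨τ, c⟩ ⟨τ', c'⟩ h => ?_, by simp [Fintype.card_perm, Nat.factorial_succ, mul_comm]⟩
  obtain rfl : c = c' := by simpa using congr($h (Fin.last m))
  have : τ = τ' := ext fun i => by simpa using congr($h i.castSucc)
  rw [this]

theorem sum_perm_succ {M : Type*} [AddCommMonoid M] (f : Perm (Fin (m + 1)) → M) :
    ∑ σ, f σ = ∑ τ : Perm (Fin m), ∑ c : Fin (m + 1), f (insertLast τ c) := by
  rw [← Fintype.sum_prod_type', Fintype.sum_bijective _ bijective_insertLast _ _ fun _ => rfl]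

end Equiv.Perm

open Equiv.Perm in
theorem prefixRank_insertLast {m : ℕ} (τ : Perm (Fin m)) (c : Fin (m + 1)) (q : Fin m) (m' : ℕ) :
    prefixRank (insertLast τ c) q.castSucc m'
      = prefixRank τ q m' + if m < m' ∧ (τ q).castSucc < c then 1 else 0 := by
  have hcomp : insertLast τ c ∘ Fin.castSucc = c.succAbove ∘ τ := by
    funext i; simp
  have hlast : c.succAbove (τ q) ≤ c ↔ (τ q).castSucc < c := by
    rw [← Fin.succAbove_lt_iff_castSucc_lt, le_iff_lt_or_eq, or_iff_left (Fin.succAbove_ne c _)]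
  rw [prefixRank_castSucc, hcomp, prefixRank_comp_strictMono (Fin.strictMono_succAbove c),
    insertLast_castSucc, insertLast_last]
  simp only [hlast]

open Equiv.Perm in
theorem mul_sum_perm_ascPochhammer_prefixRank_succ {m t : ℕ} (ht : t ≤ m) (q : Fin m) (k : ℕ)
    (g : ℕ → ℝ) :
    (m + 1 : ℝ) * ∑ σ : Perm (Fin (m + 1)), (ascPochhammer ℝ k).eval
          (prefixRank σ q.castSucc (m + 1) : ℝ) * g (prefixRank σ q.castSucc t)
      = (m + 1 + k) * ∑ σ : Perm (Fin (m + 1)), (ascPochhammer ℝ k).eval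
          (prefixRank σ q.castSucc m : ℝ) * g (prefixRank σ q.castSucc t) := by
  rw [sum_perm_succ, sum_perm_succ, mul_sum, mul_sum]
  refine sum_congr rfl fun τ _ => ?_
  have hall (c : Fin (m + 1)) : prefixRank (insertLast τ c) q.castSucc (m + 1)
      = m - τ q + if (τ q).castSucc < c then 1 else 0 := by
    rw [prefixRank_insertLast, prefixRank_perm _ _ (Nat.le_succ m)]; simp
  have hle {m'} (hm' : m' ≤ m) (c : Fin (m + 1)) :
      prefixRank (insertLast τ c) q.castSucc m' = prefixRank τ q m' := by
    rw [prefixRank_insertLast]; simp [not_lt.mpr hm']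
  simp only [hall, hle ht, hle le_rfl, prefixRank_perm _ _ le_rfl]
  rw [← sum_mul, sum_ascPochhammer_eval_add_ite, sum_const, card_univ, Fintype.card_fin,
    nsmul_eq_mul]
  push_cast
  ring

def DependsOnlyOnOrder {ι α β : Type*} [LE α] (F : (ι → α) → β) : Prop :=
  ∀ x y : ι → α, (∀ i j, x i ≤ x j ↔ y i ≤ y j) → F x = F y

section Exchangeable

open Function

variable {N : ℕ} {β : Type*} {F : (Fin N → ℝ) → β}

theorem DependsOnlyOnOrder.apply_comp_perm (hF : DependsOnlyOnOrder F) {x : Fin N → ℝ}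
    (hx : Injective x) (e : Perm (Fin N)) :
    F (x ∘ e) = F fun i => ((((Tuple.sort x)⁻¹ * e) i : ℕ) : ℝ) := by
  have hmono : StrictMono (x ∘ Tuple.sort x) :=
    (Tuple.monotone_sort x).strictMono_of_injective (hx.comp (Tuple.sort x).injective)
  refine hF _ _ fun i j => ?_
  simp only [Function.comp_apply, Perm.mul_apply, Nat.cast_le, Fin.val_fin_le]
  have hsort (a : Fin N) : x a = (x ∘ Tuple.sort x) ((Tuple.sort x)⁻¹ a) := by
    simp [Perm.inv_def]
  rw [hsort (e i), hsort (e j)]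
  exact hmono.le_iff_le

theorem DependsOnlyOnOrder.sum_perm_comp [AddCommMonoid β] (hF : DependsOnlyOnOrder F)
    {x : Fin N → ℝ} (hx : Injective x) :
    ∑ e : Perm (Fin N), F (x ∘ e) = ∑ σ : Perm (Fin N), F fun i => ((σ i : ℕ) : ℝ) := by
  simp only [hF.apply_comp_perm hx]
  exact Equiv.sum_comp (Equiv.mulLeft (Tuple.sort x)⁻¹)
    fun σ : Perm (Fin N) => F fun i => ((σ i : ℕ) : ℝ)

end Exchangeable

section NoAtoms

variable {ι α : Type*} [Fintype ι] [MeasurableSpace α] [MeasurableEq α] (ν : Measure α)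
  [IsProbabilityMeasure ν] [NullSingletonClass ν]

theorem measure_pi_setOf_apply_eq_apply {i j : ι} (hij : i ≠ j) :
    Measure.pi (fun _ : ι => ν) {x | x i = x j} = 0 := by
  have hind : IndepFun (fun x : ι → α => x i) (fun x => x j) (Measure.pi fun _ : ι => ν) :=
    (iIndepFun_pi (X := fun _ => id) fun _ => aemeasurable_id).indepFun hij
  have hdiag : MeasurableSet {p : α × α | p.1 = p.2} :=
    measurableSet_eq_fun measurable_fst measurable_snd
  rw [show {x : ι → α | x i = x j} = (fun x => (x i, x j)) ⁻¹' {p | p.1 = p.2} from rfl,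
    ← Measure.map_apply ((measurable_pi_apply i).prodMk (measurable_pi_apply j)) hdiag,
    (indepFun_iff_map_prod_eq_prod_map_map (measurable_pi_apply i).aemeasurable
      (measurable_pi_apply j).aemeasurable).mp hind, Measure.prod_apply hdiag]
  simp [(measurePreserving_eval (fun _ : ι => ν) j).map_eq, Set.preimage]

theorem ae_injective_pi : ∀ᵐ x ∂Measure.pi (fun _ : ι => ν), Function.Injective x := by
  have : ∀ᵐ x ∂Measure.pi (fun _ : ι => ν), ∀ i j, i ≠ j → x i ≠ x j := by
    refine ae_all_iff.2 fun i => ae_all_iff.2 fun j => ?_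
    by_cases hij : i = j
    · simp [hij]
    · filter_upwards [measure_eq_zero_iff_ae_notMem.1 (measure_pi_setOf_apply_eq_apply ν hij)]
        with x hx using fun _ => hx
  filter_upwards [this] with x hx i j hxij
  by_contra hij
  exact hx i j hij hxij

end NoAtoms

theorem integral_pi_eq_sum_perm {N : ℕ} (ν : Measure ℝ) [IsProbabilityMeasure ν]
    [NullSingletonClass ν] {F : (Fin N → ℝ) → ℝ} (hFm : Measurable F) (hF : DependsOnlyOnOrder F) :
    ∫ x, F x ∂Measure.pi (fun _ => ν)
      = (N.factorial : ℝ)⁻¹ * ∑ σ : Perm (Fin N), F fun i => ((σ i : ℕ) : ℝ) := by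
  set P := Measure.pi fun _ : Fin N => ν
  have hmeas (e : Perm (Fin N)) : Measurable fun x : Fin N → ℝ => x ∘ e :=
    measurable_pi_lambda _ fun j => measurable_pi_apply (e j)
  have hinv (e : Perm (Fin N)) : ∫ x, F (x ∘ e) ∂P = ∫ x, F x ∂P :=
    (measurePreserving_arrowCongr' (fun _ => ν) (fun _ => ν) e.symm (MeasurableEquiv.refl ℝ)
      fun _ => MeasurePreserving.id ν).integral_comp' F
  have hint (e : Perm (Fin N)) : Integrable (fun x => F (x ∘ e)) P := by
    refine Integrable.of_bound (hFm.comp (hmeas e)).aestronglyMeasurable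
      (∑ σ : Perm (Fin N), |F fun i => ((σ i : ℕ) : ℝ)|) ?_
    filter_upwards [ae_injective_pi ν] with x hx
    rw [hF.apply_comp_perm hx, Real.norm_eq_abs]
    exact single_le_sum (f := fun σ : Perm (Fin N) => |F fun i => ((σ i : ℕ) : ℝ)|)
      (fun _ _ => abs_nonneg _) (mem_univ _)
  calc ∫ x, F x ∂P = (N.factorial : ℝ)⁻¹ * ∑ e : Perm (Fin N), ∫ x, F (x ∘ e) ∂P := by
        simp only [hinv, sum_const, card_univ, Fintype.card_perm, Fintype.card_fin, nsmul_eq_mul]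
        field_simp
    _ = (N.factorial : ℝ)⁻¹ * ∫ x, ∑ e : Perm (Fin N), F (x ∘ e) ∂P := by
        rw [integral_finsetSum _ fun e _ => hint e]
    _ = _ := by
        rw [integral_congr_ae ((ae_injective_pi ν).mono fun x hx => hF.sum_perm_comp hx),
          integral_const, probReal_univ, one_smul]

theorem absRank_eq_prefixRank {Ω : Type*} (X : ℕ → Ω → ℝ) {t m N : ℕ} (ht : 1 ≤ t) (htN : t ≤ N)
    (hm : m ≤ N) (ω : Ω) :
    absRank X t m ω = prefixRank (fun i : Fin N => X (i + 1) ω) ⟨t - 1, by omega⟩ m := by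
  have hXt : X (t - 1 + 1) ω = X t ω := by rw [Nat.sub_add_cancel ht]
  unfold absRank prefixRank
  rw [← card_map (Fin.valEmbedding.trans (addRightEmbedding 1))]
  congr 1
  ext j
  simp only [mem_filter, mem_Icc, mem_map, mem_univ, true_and, Function.Embedding.trans_apply,
    Fin.valEmbedding_apply, addRightEmbedding_apply, hXt]
  constructor
  · rintro ⟨⟨hj1, hjm⟩, hle⟩
    exact ⟨⟨j - 1, by omega⟩, ⟨by simp; omega, by simpa [Nat.sub_add_cancel hj1] using hle⟩,
      by simp; omega⟩
  · rintro ⟨a, ⟨ham, hle⟩, rfl⟩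
    exact ⟨⟨by omega, by omega⟩, hle⟩

theorem exists_perm_prefixRank_eq {N r : ℕ} (hr : r ∈ Set.Icc 1 N) (q : Fin N) :
    ∃ σ : Perm (Fin N), prefixRank σ q N = r := by
  obtain ⟨hr1, hrN⟩ := hr
  refine ⟨Equiv.swap q ⟨N - r, by omega⟩, ?_⟩
  rw [prefixRank_perm _ _ le_rfl, Equiv.swap_apply_left]
  simp only
  omega

/-- `E[A_{t,m}^(k); R_t = r]`, with `x^(k) = x (x + 1) ⋯ (x + k - 1)` the rising factorial. -/
def absRankMoment {Ω : Type*} [MeasurableSpace Ω] (μ : Measure Ω) (X : ℕ → Ω → ℝ)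
    (t r k m : ℕ) : ℝ :=
  ∫ ω in {ω | relRank X t ω = r}, (ascPochhammer ℝ k).eval (absRank X t m ω : ℝ) ∂μ

namespace IIDContinuousOn

variable {Ω : Type*} [MeasurableSpace Ω] {μ : Measure Ω} {n : ℕ} {X : ℕ → Ω → ℝ}

theorem measurable_absRank (hX : IIDContinuousOn X (Set.Icc 1 n) μ) {t m : ℕ} (ht : 1 ≤ t)
    (htn : t ≤ n) (hmn : m ≤ n) : Measurable (absRank X t m) := by
  unfold absRank
  simp only [card_filter]
  refine Finset.measurable_sum _ fun j hj => Measurable.ite ?_ measurable_const measurable_const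
  rw [mem_Icc] at hj
  exact measurableSet_le (hX.1 t ⟨ht, htn⟩) (hX.1 j ⟨hj.1, hj.2.trans hmn⟩)

theorem measurableSet_relRank_eq (hX : IIDContinuousOn X (Set.Icc 1 n) μ) {t : ℕ} (ht : 1 ≤ t)
    (htn : t ≤ n) (r : ℕ) : MeasurableSet {ω | relRank X t ω = r} :=
  hX.measurable_absRank ht htn htn (measurableSet_singleton r)

theorem absRankMoment_self (hX : IIDContinuousOn X (Set.Icc 1 n) μ) {t : ℕ} (ht : 1 ≤ t)
    (htn : t ≤ n) (r k : ℕ) :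
    absRankMoment μ X t r k t
      = μ.real {ω | relRank X t ω = r} * (ascPochhammer ℝ k).eval (r : ℝ) := by
  rw [absRankMoment, setIntegral_congr_fun (g := fun _ => (ascPochhammer ℝ k).eval (r : ℝ))
    (hX.measurableSet_relRank_eq ht htn r) fun ω (hω : relRank X t ω = r) => by
      rw [← hω, relRank], setIntegral_const, smul_eq_mul]

variable [IsProbabilityMeasure μ]

theorem map_eq_pi (hX : IIDContinuousOn X (Set.Icc 1 n) μ) {N : ℕ} (hN : 1 ≤ N) (hNn : N ≤ n) :
    μ.map (fun ω (i : Fin N) => X (i + 1) ω) = Measure.pi fun _ => μ.map (X 1) := by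
  obtain ⟨hmeas, hindep, hident, -⟩ := hX
  have hmem (i : Fin N) : (i : ℕ) + 1 ∈ Set.Icc 1 n := ⟨by omega, by omega⟩
  have hindep' : iIndepFun (fun i : Fin N => X (i + 1)) μ :=
    hindep.precomp (g := fun i : Fin N => ⟨(i : ℕ) + 1, hmem i⟩) fun i j h => by
      simpa [Fin.ext_iff] using h
  rw [(iIndepFun_iff_map_fun_eq_pi_map fun i => (hmeas _ (hmem i)).aemeasurable).mp hindep']
  congr with i : 1
  exact (hident _ (hmem i) 1 ⟨le_rfl, by omega⟩).map_eq

theorem integral_eq_sum_perm (hX : IIDContinuousOn X (Set.Icc 1 n) μ) {N : ℕ} (hN : 1 ≤ N)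
    (hNn : N ≤ n) {F : (Fin N → ℝ) → ℝ} (hFm : Measurable F) (hF : DependsOnlyOnOrder F) :
    ∫ ω, F (fun i : Fin N => X (i + 1) ω) ∂μ
      = (N.factorial : ℝ)⁻¹ * ∑ σ : Perm (Fin N), F fun i => ((σ i : ℕ) : ℝ) := by
  have hX1 : Measurable (X 1) := hX.1 1 ⟨le_rfl, by omega⟩
  have hY : Measurable fun ω (i : Fin N) => X (i + 1) ω :=
    measurable_pi_lambda _ fun i => hX.1 _ ⟨by omega, by omega⟩
  have := Measure.isProbabilityMeasure_map (μ := μ) hX1.aemeasurable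
  have : NullSingletonClass (μ.map (X 1)) := ⟨fun x => by
    rw [Measure.map_apply hX1 (measurableSet_singleton x)]; exact hX.2.2.2 1 ⟨le_rfl, by omega⟩ x⟩
  rw [← integral_map hY.aemeasurable hFm.aestronglyMeasurable, hX.map_eq_pi hN hNn]
  exact integral_pi_eq_sum_perm _ hFm hF

theorem integral_absRank_relRank (hX : IIDContinuousOn X (Set.Icc 1 n) μ) {t m N : ℕ}
    (ht : 1 ≤ t) (htN : t ≤ N) (hNn : N ≤ n) (hm : m ≤ N) (G : ℕ → ℕ → ℝ) :
    ∫ ω, G (absRank X t m ω) (relRank X t ω) ∂μ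
      = (N.factorial : ℝ)⁻¹ * ∑ σ : Perm (Fin N),
          G (prefixRank σ ⟨t - 1, by omega⟩ m) (prefixRank σ ⟨t - 1, by omega⟩ t) := by
  set q : Fin N := ⟨t - 1, by omega⟩
  have hFm : Measurable fun x : Fin N → ℝ => G (prefixRank x q m) (prefixRank x q t) :=
    (measurable_of_countable (Function.uncurry G)).comp
      ((measurable_prefixRank q m).prodMk (measurable_prefixRank q t))
  have hF : DependsOnlyOnOrder fun x : Fin N → ℝ => G (prefixRank x q m) (prefixRank x q t) :=
    fun x y h => by dsimp only; rw [prefixRank_congr h, prefixRank_congr h]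
  have hcast : StrictMono fun i : Fin N => ((i : ℕ) : ℝ) :=
    Nat.strictMono_cast.comp Fin.val_strictMono
  simp only [relRank, absRank_eq_prefixRank X ht htN hm, absRank_eq_prefixRank X ht htN htN]
  rw [hX.integral_eq_sum_perm (by omega) hNn hFm hF]
  simp only [← Function.comp_apply (f := fun i : Fin N => ((i : ℕ) : ℝ)),
    prefixRank_comp_strictMono hcast]

theorem mul_absRankMoment_succ (hX : IIDContinuousOn X (Set.Icc 1 n) μ) {t m : ℕ} (ht : 1 ≤ t)
    (htm : t ≤ m) (hmn : m + 1 ≤ n) (r k : ℕ) :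
    (m + 1 : ℝ) * absRankMoment μ X t r k (m + 1) = (m + 1 + k) * absRankMoment μ X t r k m := by
  have hS := hX.measurableSet_relRank_eq ht (by omega) r
  let G (a b : ℕ) : ℝ := (ascPochhammer ℝ k).eval (a : ℝ) * if b = r then 1 else 0
  have hG (m' : ℕ) :
      absRankMoment μ X t r k m' = ∫ ω, G (absRank X t m' ω) (relRank X t ω) ∂μ := by
    rw [absRankMoment, ← integral_indicator hS]
    congr with ω
    by_cases h : relRank X t ω = r <;> simp [G, h]
  rw [hG, hG, hX.integral_absRank_relRank ht (by omega) hmn le_rfl G,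
    hX.integral_absRank_relRank ht (by omega) hmn (Nat.le_succ m) G, mul_left_comm,
    mul_left_comm (_ + _ + _)]
  congr 1
  exact mul_sum_perm_ascPochhammer_prefixRank_succ htm ⟨t - 1, by omega⟩ k
    fun b => if b = r then 1 else 0

theorem ascPochhammer_mul_absRankMoment (hX : IIDContinuousOn X (Set.Icc 1 n) μ) {t m : ℕ}
    (ht : 1 ≤ t) (htm : t ≤ m) (hmn : m ≤ n) (r k : ℕ) :
    (ascPochhammer ℝ k).eval ((t : ℝ) + 1) * absRankMoment μ X t r k m
      = (ascPochhammer ℝ k).eval ((m : ℝ) + 1) * absRankMoment μ X t r k t := by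
  induction m, htm using Nat.le_induction with
  | base => rfl
  | succ m htm ih =>
    have hrise := ascPochhammer_eval_succ (S := ℝ) k (m + 1)
    push_cast at hrise ⊢
    apply mul_left_cancel₀ (by positivity : (m + 1 : ℝ) ≠ 0)
    linear_combination (ascPochhammer ℝ k).eval ((t : ℝ) + 1)
        * mul_absRankMoment_succ hX ht htm hmn r k
      + (m + 1 + k) * ih (by omega) - absRankMoment μ X t r k t * hrise

theorem measureReal_relRank_pos (hX : IIDContinuousOn X (Set.Icc 1 n) μ) {t r : ℕ} (ht : 1 ≤ t)
    (htn : t ≤ n) (hr : r ∈ Set.Icc 1 t) : 0 < μ.real {ω | relRank X t ω = r} := by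
  let G (_ b : ℕ) : ℝ := if b = r then 1 else 0
  obtain ⟨σ₀, hσ₀⟩ := exists_perm_prefixRank_eq hr ⟨t - 1, by omega⟩
  have hG : μ.real {ω | relRank X t ω = r} = ∫ ω, G (absRank X t t ω) (relRank X t ω) ∂μ := by
    rw [← integral_indicator_one (hX.measurableSet_relRank_eq ht htn r)]
    congr with ω
    by_cases h : relRank X t ω = r <;> simp [G, h]
  rw [hG, hX.integral_absRank_relRank ht le_rfl htn le_rfl G]
  refine mul_pos (by positivity) (lt_of_lt_of_le one_pos ?_)
  calc (1 : ℝ) = G t (prefixRank σ₀ ⟨t - 1, by omega⟩ t) := by simp [G, hσ₀]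
    _ ≤ _ := single_le_sum
        (f := fun σ : Perm (Fin t) => G t (prefixRank σ ⟨t - 1, by omega⟩ t))
        (fun _ _ => by positivity) (mem_univ σ₀)

end IIDContinuousOn

theorem stmt_13_general {Ω : Type*} [MeasurableSpace Ω] (μ : Measure Ω) [IsProbabilityMeasure μ]
    (n : ℕ) (X : ℕ → Ω → ℝ) (hX : IIDContinuousOn X (Set.Icc 1 n) μ)
    (t : ℕ) (ht1 : 1 ≤ t) (htn : t ≤ n)
    (r : ℕ) (hr : r ∈ Set.Icc 1 t)
    (k : ℕ) :
    ∫ ω, (∏ j ∈ Finset.range k, ((absRank X t n ω : ℝ) + (j : ℝ)))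
        ∂(μ[|{ω | relRank X t ω = r}])
      = ((∏ j ∈ Finset.range k, ((n : ℝ) + 1 + (j : ℝ)))
          / (∏ j ∈ Finset.range k, ((t : ℝ) + 1 + (j : ℝ))))
        * ∏ j ∈ Finset.range k, ((r : ℝ) + (j : ℝ)) := by
  -- `μ[|S]` is the zero measure when `μ S = 0`, so the event must have positive probability.
  have hpos := hX.measureReal_relRank_pos ht1 htn hr
  have hmoment := hX.ascPochhammer_mul_absRankMoment ht1 htn le_rfl r k
  rw [hX.absRankMoment_self ht1 htn r k] at hmoment
  have hden : (ascPochhammer ℝ k).eval ((t : ℝ) + 1) ≠ 0 :=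
    (ascPochhammer_pos k _ (by positivity)).ne'
  simp only [← ascPochhammer_eval_eq_prod_range]
  rw [ProbabilityTheory.cond, integral_smul_measure, ENNReal.toReal_inv, ← measureReal_def,
    smul_eq_mul, ← absRankMoment]
  field_simp
  linear_combination hmoment

/-- conditional factorial moments of the absolute rank:
`E[A_{t,n}(A_{t,n}+1)⋯(A_{t,n}+k−1) | R_t = r]
  = [(n+1)⋯(n+k)/((t+1)⋯(t+k))] · r(r+1)⋯(r+k−1)`. -/
theorem stmt_13 {Ω : Type*} [MeasurableSpace Ω] (μ : Measure Ω) [IsProbabilityMeasure μ]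
    (n : ℕ) (X : ℕ → Ω → ℝ) (hX : IIDContinuousOn X (Set.Icc 1 n) μ)
    (t : ℕ) (ht1 : 1 ≤ t) (htn : t ≤ n)
    (r : ℕ) (hr : r ∈ Set.Icc 1 t)
    (k : ℕ) (hk : 1 ≤ k) :
    ∫ ω, (∏ j ∈ Finset.range k, ((absRank X t n ω : ℝ) + (j : ℝ)))
        ∂(μ[|{ω | relRank X t ω = r}])
      = ((∏ j ∈ Finset.range k, ((n : ℝ) + 1 + (j : ℝ)))
          / (∏ j ∈ Finset.range k, ((t : ℝ) + 1 + (j : ℝ))))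
        * ∏ j ∈ Finset.range k, ((r : ℝ) + (j : ℝ)) :=
  stmt_13_general μ n X hX t ht1 htn r hr k
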